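/- Let B be a minimal subset such that Y ⫫̸ X | B for a relevant variable X. Then every variable X' ∈ B has degree at most |B|, i.e., there exists a set B' of size at most |B| with Y ⫫̸ X' | B'. -/

import Mathlib

/-! Swap `X'` out of `B` and `X` in. By minimality `X` is independent of `Y` given
`B \ {X'}`; if `X'` were also independent of `Y` given `(B \ {X'}) ∪ {X}`, contraction and
weak union would make `X` independent of `Y` given `B`, contradicting `Y ⫫̸ X | B`. -/

open Finset

section SemiGraphoid

variable {ι : Type*} [DecidableEq ι] {CI : Finset ι → Finset ι → Finset ι → Prop}

theorem ci_union_of_ci_of_ci_union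
    (weakUnion : ∀ S T U R, CI S (T ∪ U) R → CI S T (R ∪ U))
    (contraction : ∀ S T U R, CI S T R → CI S U (R ∪ T) → CI S (T ∪ U) R)
    {S T U R : Finset ι} (hT : CI S T R) (hU : CI S U (R ∪ T)) : CI S T (R ∪ U) :=
  weakUnion _ _ _ _ (contraction _ _ _ _ hT hU)

theorem not_ci_erase_union_singleton
    (weakUnion : ∀ S T U R, CI S (T ∪ U) R → CI S T (R ∪ U))
    (contraction : ∀ S T U R, CI S T R → CI S U (R ∪ T) → CI S (T ∪ U) R)
    {S : Finset ι} {X X' : ι} {B : Finset ι} (hX' : X' ∈ B)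
    (hdep : ¬ CI S {X} B) (hind : CI S {X} (B.erase X')) :
    ¬ CI S {X'} (B.erase X' ∪ {X}) := fun h ↦ by
  have := ci_union_of_ci_of_ci_union weakUnion contraction hind h
  rw [erase_union_eq X' B hX'] at this
  exact hdep this

end SemiGraphoid

theorem card_erase_union_singleton_le {α : Type*} [DecidableEq α] {B : Finset α} {a : α}
    (ha : a ∈ B) (b : α) : #(B.erase a ∪ {b}) ≤ #B := by
  calc #(B.erase a ∪ {b}) ≤ #(B.erase a) + #{b} := card_union_le _ _
    _ = #B := by rw [card_singleton, card_erase_add_one ha]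

theorem minimal_conditioning_degree_le_card_general
    {ι : Type*} [Fintype ι] [DecidableEq ι]
    (CI : Finset ι → Finset ι → Finset ι → Prop)
    (weakUnion : ∀ S T U R, CI S (T ∪ U) R → CI S T (R ∪ U))
    (contraction : ∀ S T U R, CI S T R → CI S U (R ∪ T) → CI S (T ∪ U) R)
    (y X : ι) (hXy : X ≠ y)
    (B : Finset ι) (hB : B ⊆ (Finset.univ.erase y).erase X)
    (hdep : ¬ CI {y} {X} B)
    (hmin : ∀ B' ⊂ B, CI {y} {X} B') :
    ∀ X' ∈ B, ∃ B' ⊆ (Finset.univ.erase y).erase X',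
      B'.card ≤ B.card ∧ ¬ CI {y} {X'} B' := by
  intro X' hX'
  refine ⟨B.erase X' ∪ {X}, ?_, card_erase_union_singleton_le hX' X,
    not_ci_erase_union_singleton weakUnion contraction hX' hdep (hmin _ (erase_ssubset hX'))⟩
  intro a ha
  have := @hB a
  simp only [mem_union, mem_erase, mem_singleton, mem_univ, and_true] at ha this ⊢
  grind

/-- If `B` is a minimal subset with `Y ⫫̸ X | B` for a relevant variable `X`,
then every `X' ∈ B` has degree at most `|B|`: there exists `B' ⊆ V \ {X'}` with
`|B'| ≤ |B|` and `Y ⫫̸ X' | B'`.  Conditional independence is abstracted as a relation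
`CI` satisfying the semi-graphoid axioms; `y` is the output, `V = univ \ {y}`. -/
theorem minimal_conditioning_degree_le_card
    {ι : Type*} [Fintype ι] [DecidableEq ι]
    (CI : Finset ι → Finset ι → Finset ι → Prop)
    (symm : ∀ S T R, CI S T R → CI T S R)
    (decomp : ∀ S T U R, CI S (T ∪ U) R → CI S T R)
    (weakUnion : ∀ S T U R, CI S (T ∪ U) R → CI S T (R ∪ U))
    (contraction : ∀ S T U R, CI S T R → CI S U (R ∪ T) → CI S (T ∪ U) R)
    (y X : ι) (hXy : X ≠ y)
    (B : Finset ι) (hB : B ⊆ (Finset.univ.erase y).erase X)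
    (hdep : ¬ CI {y} {X} B)
    (hmin : ∀ B' ⊂ B, CI {y} {X} B') :
    ∀ X' ∈ B, ∃ B' ⊆ (Finset.univ.erase y).erase X',
      B'.card ≤ B.card ∧ ¬ CI {y} {X'} B' :=
  minimal_conditioning_degree_le_card_general CI weakUnion contraction y X hXy B hB hdep hmin
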